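/- arXiv:math/0507058 — 4 statements merged into one kernel-verified Lean document; each statement's English description precedes it below -/
import Mathlib

section
/- Let d ≥ 1, let A = C^∞(ℝ^d, ℝ) and let X be the A-module of smooth vector fields on ℝ^d. For all smooth vector fields ξ_1, …, ξ_{k+p} and η_1, …, η_ℓ on ℝ^d (k, p, ℓ ≥ 1), writing α = ξ_1 ∧ ⋯ ∧ ξ_k, β = ξ_{k+1} ∧ ⋯ ∧ ξ_{k+p} and γ = η_1 ∧ ⋯ ∧ η_ℓ in the exterior algebra ⋀_A X, the operator ∇ defined on decomposables satisfies the graded Leibniz rule in its first argument: ∇_{α∧β}(γ) = (−1)^k α ∧ (∇_β γ) + (−1)^{pℓ} (∇_α γ) ∧ β. -/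
noncomputable section
set_option synthInstance.maxHeartbeats 1000000
set_option maxHeartbeats 1000000

/-- The commutative ring `A = C^∞(ℝ^d, ℝ)` of smooth functions, as a subalgebra of all
functions `ℝ^d → ℝ`. -/
def Sm (d : ℕ) : Subalgebra ℝ ((Fin d → ℝ) → ℝ) where
  carrier := {f | ContDiff ℝ (⊤ : ℕ∞) f}
  mul_mem' hf hg := ContDiff.mul (show ContDiff ℝ (⊤ : ℕ∞) _ from hf)
    (show ContDiff ℝ (⊤ : ℕ∞) _ from hg)
  add_mem' hf hg := ContDiff.add (show ContDiff ℝ (⊤ : ℕ∞) _ from hf)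
    (show ContDiff ℝ (⊤ : ℕ∞) _ from hg)
  algebraMap_mem' _ := show ContDiff ℝ (⊤ : ℕ∞) _ from contDiff_const

lemma Sm.smooth {d : ℕ} (f : Sm d) : ContDiff ℝ (⊤ : ℕ∞) (f : (Fin d → ℝ) → ℝ) := f.2

/-- Partial derivative `∂_j f` of a smooth function, again smooth. -/
def pdSm {d : ℕ} (j : Fin d) (f : Sm d) : Sm d :=
  ⟨fun x => fderiv ℝ (f : (Fin d → ℝ) → ℝ) x (Pi.single j 1),
   show ContDiff ℝ (⊤ : ℕ∞) _ from
     (ContDiff.fderiv_right (Sm.smooth f) (by simp)).clm_apply contDiff_const⟩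

/-- The `A`-module `X` of smooth vector fields on `ℝ^d`: `d`-tuples of smooth functions. -/
abbrev VF (d : ℕ) := Fin d → Sm d

instance (d : ℕ) : CommRing (Sm d) := inferInstance
instance (d : ℕ) : Module (Sm d) (VF d) := inferInstance
instance (d : ℕ) : Ring (ExteriorAlgebra (Sm d) (VF d)) := inferInstance
instance (d : ℕ) : Module (Sm d) (ExteriorAlgebra (Sm d) (VF d)) := inferInstance
instance (d : ℕ) : Algebra (Sm d) (ExteriorAlgebra (Sm d) (VF d)) := inferInstance

/-- `(∇_ξ η)^i = Σ_j ξ^j ∂_j η^i`. -/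
def nV {d : ℕ} (ξ η : VF d) : VF d := fun i => ∑ j, ξ j * pdSm j (η i)

/-- The Lie bracket `[ξ, η] = ∇_ξ η − ∇_η ξ` of vector fields. -/
def bV {d : ℕ} (ξ η : VF d) : VF d := nV ξ η - nV η ξ

/-- `T = ⋀_A X`, the exterior algebra of the module of vector fields. -/
abbrev T (d : ℕ) := ExteriorAlgebra (Sm d) (VF d)

def ιV {d : ℕ} (ξ : VF d) : T d := ExteriorAlgebra.ι (Sm d) ξ

/-- The decomposable element `ξ_1 ∧ ⋯ ∧ ξ_k` attached to a list of vector fields. -/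
def wedgeL {d : ℕ} (L : List (VF d)) : T d := (L.map ιV).prod

/-- `∇_{ξ_1∧⋯∧ξ_k}(η_1∧⋯∧η_ℓ) = Σ_{i,j} (−1)^{i+j} ξ_1∧⋯̂ξ_i⋯∧ξ_k ∧ (∇_{ξ_i} η_j) ∧
η_1∧⋯̂η_j⋯∧η_ℓ` (indices `i`, `j` are 1-based in the mathematical formula; below they are
0-based, which does not change the parity of `i + j`). -/
def nDec {d : ℕ} (L M : List (VF d)) : T d :=
  ∑ i ∈ Finset.range L.length, ∑ j ∈ Finset.range M.length,
    (-1 : ℤ) ^ (i + j) •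
      (wedgeL (L.eraseIdx i) * ιV (nV (L.getD i 0) (M.getD j 0)) * wedgeL (M.eraseIdx j))

/-- `Q(ξ_1∧⋯∧ξ_k, η_1∧⋯∧η_ℓ) = Σ_{i,j} (−1)^{i+j} ξ_1∧⋯̂ξ_i⋯∧ξ_k ∧ [ξ_i, η_j] ∧
η_1∧⋯̂η_j⋯∧η_ℓ`. -/
def qDec {d : ℕ} (L M : List (VF d)) : T d :=
  ∑ i ∈ Finset.range L.length, ∑ j ∈ Finset.range M.length,
    (-1 : ℤ) ^ (i + j) •
      (wedgeL (L.eraseIdx i) * ιV (bV (L.getD i 0) (M.getD j 0)) * wedgeL (M.eraseIdx j))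

/-- The Schouten bracket on decomposables, with the sign `(−1)^{k−i+j−1}` (for 1-based `i`,
`j`); with 0-based `i`, `j` this sign is `(−1)^{k+i+j+1}`. -/
def schDec {d : ℕ} (L M : List (VF d)) : T d :=
  ∑ i ∈ Finset.range L.length, ∑ j ∈ Finset.range M.length,
    (-1 : ℤ) ^ (L.length + i + j + 1) •
      (wedgeL (L.eraseIdx i) * ιV (bV (L.getD i 0) (M.getD j 0)) * wedgeL (M.eraseIdx j))


lemma wedgeL_append {d : ℕ} (L M : List (VF d)) :
    wedgeL (L ++ M) = wedgeL L * wedgeL M := by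
  simp [wedgeL]

lemma wedgeL_cons {d : ℕ} (x : VF d) (M : List (VF d)) :
    wedgeL (x :: M) = ιV x * wedgeL M := by
  simp [wedgeL]

lemma ιV_mul_wedgeL {d : ℕ} (x : VF d) (M : List (VF d)) :
    ιV x * wedgeL M = (-1 : ℤ) ^ M.length • (wedgeL M * ιV x) := by
  induction M with
  | nil => simp [wedgeL]
  | cons a M ih =>
    have hxa : ιV x * ιV a = - (ιV a * ιV x) :=
      eq_neg_of_add_eq_zero_left (ExteriorAlgebra.ι_add_mul_swap (R := Sm d) x a)
    rw [wedgeL_cons, ← mul_assoc, hxa, neg_mul, mul_assoc, ih, mul_smul_comm,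
      ← neg_smul, ← mul_assoc]
    congr 1
    rw [List.length_cons, pow_succ]
    ring

lemma wedgeL_comm {d : ℕ} (L M : List (VF d)) :
    wedgeL L * wedgeL M = (-1 : ℤ) ^ (L.length * M.length) • (wedgeL M * wedgeL L) := by
  induction L with
  | nil => simp [wedgeL]
  | cons a L ih =>
    rw [wedgeL_cons, mul_assoc, ih, mul_smul_comm, ← mul_assoc, ιV_mul_wedgeL,
      smul_mul_assoc, smul_smul, ← pow_add, mul_assoc, ← wedgeL_cons]
    congr 2
    rw [List.length_cons]
    ring

/-- the graded Leibniz rule of `∇` in its first argument on decomposables: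
`∇_{α∧β}(γ) = (−1)^k α ∧ (∇_β γ) + (−1)^{pℓ} (∇_α γ) ∧ β` where `α = ξ_1∧⋯∧ξ_k`,
`β = ξ_{k+1}∧⋯∧ξ_{k+p}`, `γ = η_1∧⋯∧η_ℓ` and `k, p, ℓ ≥ 1`. -/
theorem nabla_leibniz_first_argument (d : ℕ) (hd : 1 ≤ d)
    (A B C : List (VF d)) (hA : A ≠ []) (hB : B ≠ []) (hC : C ≠ []) :
    nDec (A ++ B) C =
      (-1 : ℤ) ^ A.length • (wedgeL A * nDec B C) +
        (-1 : ℤ) ^ (B.length * C.length) • (nDec A C * wedgeL B) := by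
  unfold nDec
  rw [List.length_append, Finset.sum_range_add, add_comm]
  congr 1
  · simp only [Finset.mul_sum, Finset.smul_sum]
    refine Finset.sum_congr rfl fun i hi => Finset.sum_congr rfl fun j hj => ?_
    rw [List.eraseIdx_append_of_length_le (Nat.le_add_right _ _),
      List.getD_append_right _ _ _ _ (Nat.le_add_right _ _), Nat.add_sub_cancel_left,
      wedgeL_append, mul_smul_comm, smul_smul, ← pow_add, add_assoc]
    simp only [mul_assoc]
  · simp only [Finset.sum_mul, Finset.smul_sum]
    refine Finset.sum_congr rfl fun i hi => Finset.sum_congr rfl fun j hj => ?_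
    have hi' := Finset.mem_range.mp hi
    have hj' := Finset.mem_range.mp hj
    rw [List.eraseIdx_append_of_lt_length hi', List.getD_append _ _ _ _ hi', wedgeL_append]
    have hE : (C.eraseIdx j).length + 1 = C.length := by
      rw [List.length_eraseIdx_of_lt hj']; omega
    set x := nV (A.getD i 0) (C.getD j 0) with hx
    have hcomm : wedgeL B * (ιV x * wedgeL (C.eraseIdx j)) =
        (-1 : ℤ) ^ (B.length * C.length) • (ιV x * wedgeL (C.eraseIdx j) * wedgeL B) := by
      rw [← wedgeL_cons, wedgeL_comm, List.length_cons, hE, wedgeL_cons]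
    rw [mul_assoc (wedgeL (A.eraseIdx i) * wedgeL B), mul_assoc (wedgeL (A.eraseIdx i)),
      hcomm, mul_smul_comm, smul_smul, smul_mul_assoc, smul_smul]
    congr 1
    · ring
    · simp only [mul_assoc]
end
end

section
/- Fix n ≥ 1 and integers d_1, …, d_n. Define τ(d_1, …, d_n) = (−1)^{Σ_{i=1}^n (n−i) d_i}. For a permutation σ ∈ S_n, let ε(σ) be its signature, let ε_odd(σ; d) be the signature of the permutation that σ induces on the positions i with d_i odd (i.e. the sign given by the change of relative order of these positions), and let ε_even(σ; d) be the signature of the permutation that σ induces on the positions i with d_i even. Then τ(d_{σ(1)}, …, d_{σ(n)}) = ε_odd(σ; d) · ε_even(σ; d) · ε(σ) · τ(d_1, …, d_n). -/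
noncomputable section

/-- `τ(d_1, …, d_n) = (−1)^{Σ_{i=1}^n (n−i) d_i}` (as a sign in `ℤˣ`); here the family of
degrees is indexed by `Fin n`, position `i : Fin n` corresponding to the 1-based index
`i + 1`. -/
def tauSgn (n : ℕ) (dg : Fin n → ℤ) : ℤˣ :=
  (-1 : ℤˣ) ^ (∑ i : Fin n, ((n : ℤ) - ((i : ℕ) + 1)) * dg i)

/-- The sign of the permutation induced by `σ` on the entries satisfying the predicate `p`:
`(−1)` to the number of inversions of `σ` (pairs of positions `i < j` with
`σ(i) > σ(j)`) both of whose entries satisfy `p`, i.e. the sign given by the change of the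
relative order of these entries. -/
def inducedSign {n : ℕ} (σ : Equiv.Perm (Fin n)) (p : Fin n → Prop) [DecidablePred p] : ℤˣ :=
  (-1 : ℤˣ) ^ (Finset.univ.filter (fun ij : Fin n × Fin n =>
      ij.1 < ij.2 ∧ σ ij.2 < σ ij.1 ∧ p (σ ij.1) ∧ p (σ ij.2))).card

namespace TauPermAux

open Finset Equiv

variable {n : ℕ}

/-- The set of inversions of a permutation of `Fin n`. -/
def invSet (σ : Equiv.Perm (Fin n)) : Finset (Fin n × Fin n) :=
  Finset.univ.filter fun ij => ij.1 < ij.2 ∧ σ ij.2 < σ ij.1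

lemma sign_eq_signAux (σ : Equiv.Perm (Fin n)) :
    Equiv.Perm.sign σ = Equiv.Perm.signAux σ := by
  refine Equiv.Perm.swap_induction_on σ ?_ ?_
  · simp
  · intro f x y hne ih
    rw [Equiv.Perm.signAux_mul, Equiv.Perm.signAux_swap hne, Equiv.Perm.sign_mul,
      Equiv.Perm.sign_swap hne, ih]

lemma signAux_eq_pow (σ : Equiv.Perm (Fin n)) :
    Equiv.Perm.signAux σ = (-1 : ℤˣ) ^ (invSet σ).card := by
  unfold Equiv.Perm.signAux
  rw [Finset.prod_ite, Finset.prod_const, Finset.prod_const, one_pow, mul_one]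
  congr 1
  refine Finset.card_bij' (fun x _ => (x.2, x.1)) (fun p _ => ⟨p.2, p.1⟩) ?_ ?_ ?_ ?_
  · rintro ⟨a, b⟩ hx
    simp only [Finset.mem_filter, Equiv.Perm.mem_finPairsLT] at hx
    simp only [invSet, Finset.mem_filter, Finset.mem_univ, true_and]
    exact ⟨hx.1, lt_of_le_of_ne hx.2 (fun h => (ne_of_gt hx.1) (σ.injective h))⟩
  · rintro ⟨a, b⟩ hp
    simp only [invSet, Finset.mem_filter, Finset.mem_univ, true_and] at hp
    simp only [Finset.mem_filter, Equiv.Perm.mem_finPairsLT]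
    exact ⟨hp.1, le_of_lt hp.2⟩
  · rintro ⟨a, b⟩ _; rfl
  · rintro ⟨a, b⟩ _; rfl

/-- The sign character of `ZMod 2`. -/
def χ : ZMod 2 → ℤˣ := fun x => if x = 0 then 1 else -1

lemma χ_add (x y : ZMod 2) : χ (x + y) = χ x * χ y := by revert x y; decide

lemma χ_natCast (m : ℕ) : ((-1 : ℤˣ)) ^ m = χ (m : ZMod 2) := by
  induction m with
  | zero => simp [χ]
  | succ k ih =>
    rw [pow_succ, ih, Nat.cast_succ, χ_add]
    norm_num [χ]

lemma χ_intCast (z : ℤ) : ((-1 : ℤˣ)) ^ z = χ ((z : ℤ) : ZMod 2) := by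
  cases z with
  | ofNat m =>
    rw [Int.ofNat_eq_natCast, zpow_natCast, χ_natCast]
    norm_cast
  | negSucc m =>
    have h1 : ((Int.negSucc m : ℤ) : ZMod 2) = ((m + 1 : ℕ) : ZMod 2) := by
      rw [Int.negSucc_eq]
      push_cast
      rw [neg_add, CharTwo.neg_eq, CharTwo.neg_eq]
    rw [h1, Int.negSucc_eq, zpow_neg, Int.units_inv_eq_self,
      show ((m : ℤ) + 1) = ((m + 1 : ℕ) : ℤ) by push_cast; ring, zpow_natCast, χ_natCast]

lemma cast_even {z : ℤ} (h : Even z) : (z : ZMod 2) = 0 := by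
  obtain ⟨a, rfl⟩ := h; push_cast; rw [CharTwo.add_self_eq_zero]

lemma cast_odd {z : ℤ} (h : Odd z) : (z : ZMod 2) = 1 := by
  obtain ⟨a, rfl⟩ := h; push_cast; rw [two_mul, CharTwo.add_self_eq_zero, zero_add]

lemma parity_pointwise (x y : ℤ) :
    ((if Odd x ∧ Odd y then (1 : ZMod 2) else 0) + (if Even x ∧ Even y then 1 else 0) + 1)
      = (x : ZMod 2) + (y : ZMod 2) := by
  rcases Int.even_or_odd x with hx | hx <;> rcases Int.even_or_odd y with hy | hy
  · rw [if_neg (fun h => Int.not_odd_iff_even.mpr hx h.1), if_pos ⟨hx, hy⟩,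
      cast_even hx, cast_even hy]; decide
  · rw [if_neg (fun h => Int.not_odd_iff_even.mpr hx h.1),
      if_neg (fun h => Int.not_even_iff_odd.mpr hy h.2), cast_even hx, cast_odd hy]; decide
  · rw [if_neg (fun h => Int.not_odd_iff_even.mpr hy h.2),
      if_neg (fun h => Int.not_even_iff_odd.mpr hx h.1), cast_odd hx, cast_even hy]; decide
  · rw [if_pos ⟨hx, hy⟩, if_neg (fun h => Int.not_even_iff_odd.mpr hx h.1),
      cast_odd hx, cast_odd hy]; decide

lemma card_filter_lt (a : Fin n) :
    (Finset.univ.filter fun j : Fin n => j < a).card = (a : ℕ) := by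
  have : (Finset.univ.filter fun j : Fin n => j < a) = Finset.Iio a := by ext x; simp
  rw [this, Fin.card_Iio]

lemma card_filter_apply_lt (σ : Equiv.Perm (Fin n)) (k : Fin n) :
    (Finset.univ.filter fun j => σ j < σ k).card = ((σ k : ℕ)) := by
  rw [← card_filter_lt (σ k)]
  refine Finset.card_bij (fun j _ => σ j) ?_ ?_ ?_
  · intro a ha
    simp only [Finset.mem_filter, Finset.mem_univ, true_and] at ha ⊢
    exact ha
  · intro a _ b _ h; exact σ.injective h
  · intro b hb
    refine ⟨σ.symm b, ?_, by simp⟩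
    simp only [Finset.mem_filter, Finset.mem_univ, true_and] at *
    simpa using hb

lemma split1 (σ : Equiv.Perm (Fin n)) (k : Fin n) :
    ((k : ℕ)) = (Finset.univ.filter fun j => j < k ∧ σ j < σ k).card
      + (Finset.univ.filter fun j => j < k ∧ σ k < σ j).card := by
  rw [← card_filter_lt k]
  have hu : (Finset.univ.filter fun j : Fin n => j < k)
      = (Finset.univ.filter fun j => j < k ∧ σ j < σ k)
        ∪ (Finset.univ.filter fun j => j < k ∧ σ k < σ j) := by
    ext j
    simp only [Finset.mem_filter, Finset.mem_univ, true_and, Finset.mem_union]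
    constructor
    · intro h
      rcases lt_or_gt_of_ne (fun e : σ j = σ k => (ne_of_lt h) (σ.injective e)) with h2 | h2
      exacts [Or.inl ⟨h, h2⟩, Or.inr ⟨h, h2⟩]
    · rintro (⟨h, _⟩ | ⟨h, _⟩) <;> exact h
  rw [hu, Finset.card_union_of_disjoint]
  rw [Finset.disjoint_left]
  intro j hj hj'
  simp only [Finset.mem_filter, Finset.mem_univ, true_and] at hj hj'
  exact lt_asymm hj.2 hj'.2

lemma split2 (σ : Equiv.Perm (Fin n)) (k : Fin n) :
    ((σ k : ℕ)) = (Finset.univ.filter fun j => j < k ∧ σ j < σ k).card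
      + (Finset.univ.filter fun j => k < j ∧ σ j < σ k).card := by
  rw [← card_filter_apply_lt σ k]
  have hu : (Finset.univ.filter fun j : Fin n => σ j < σ k)
      = (Finset.univ.filter fun j => j < k ∧ σ j < σ k)
        ∪ (Finset.univ.filter fun j => k < j ∧ σ j < σ k) := by
    ext j
    simp only [Finset.mem_filter, Finset.mem_univ, true_and, Finset.mem_union]
    constructor
    · intro h
      rcases lt_or_gt_of_ne (fun e : j = k => (ne_of_lt h) (e ▸ rfl)) with h2 | h2
      exacts [Or.inl ⟨h2, h⟩, Or.inr ⟨h2, h⟩]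
    · rintro (⟨_, h⟩ | ⟨_, h⟩) <;> exact h
  rw [hu, Finset.card_union_of_disjoint]
  rw [Finset.disjoint_left]
  intro j hj hj'
  simp only [Finset.mem_filter, Finset.mem_univ, true_and] at hj hj'
  exact lt_asymm hj.1 hj'.1

lemma sum_first (σ : Equiv.Perm (Fin n)) (e : Fin n → ZMod 2) :
    (∑ p ∈ invSet σ, e (σ p.1)) =
      ∑ k : Fin n,
        ((Finset.univ.filter fun j => k < j ∧ σ j < σ k).card : ZMod 2) * e (σ k) := by
  rw [invSet, Finset.sum_filter, Fintype.sum_prod_type]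
  refine Finset.sum_congr rfl fun k _ => ?_
  simp only
  rw [← Finset.sum_filter, Finset.sum_const, nsmul_eq_mul]

lemma sum_second (σ : Equiv.Perm (Fin n)) (e : Fin n → ZMod 2) :
    (∑ p ∈ invSet σ, e (σ p.2)) =
      ∑ k : Fin n,
        ((Finset.univ.filter fun j => j < k ∧ σ k < σ j).card : ZMod 2) * e (σ k) := by
  rw [invSet, Finset.sum_filter, Fintype.sum_prod_type, Finset.sum_comm]
  refine Finset.sum_congr rfl fun k _ => ?_
  simp only
  rw [← Finset.sum_filter, Finset.sum_const, nsmul_eq_mul]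

lemma key (dg : Fin n → ℤ) (σ : Equiv.Perm (Fin n)) :
    ((∑ i : Fin n, ((n : ℤ) - ((i : ℕ) + 1)) * dg (σ i) : ℤ) : ZMod 2) =
      (((Finset.univ.filter (fun ij : Fin n × Fin n =>
          ij.1 < ij.2 ∧ σ ij.2 < σ ij.1 ∧ Odd (dg (σ ij.1)) ∧ Odd (dg (σ ij.2)))).card : ZMod 2)
        + ((Finset.univ.filter (fun ij : Fin n × Fin n =>
          ij.1 < ij.2 ∧ σ ij.2 < σ ij.1 ∧ Even (dg (σ ij.1)) ∧ Even (dg (σ ij.2)))).card : ZMod 2)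
        + ((invSet σ).card : ZMod 2))
        + ((∑ i : Fin n, ((n : ℤ) - ((i : ℕ) + 1)) * dg i : ℤ) : ZMod 2) := by
  -- the common middle expression
  set S : ZMod 2 := ∑ k : Fin n,
      (((k : ℕ) : ZMod 2) + ((σ k : ℕ) : ZMod 2)) * ((dg (σ k) : ZMod 2)) with hS
  -- Step A : LHS + L = S
  have hA : ((∑ i : Fin n, ((n : ℤ) - ((i : ℕ) + 1)) * dg (σ i) : ℤ) : ZMod 2)
      + ((∑ i : Fin n, ((n : ℤ) - ((i : ℕ) + 1)) * dg i : ℤ) : ZMod 2) = S := by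
    have hre : (∑ i : Fin n, ((n : ℤ) - ((i : ℕ) + 1)) * dg i)
        = ∑ i : Fin n, ((n : ℤ) - (((σ i : Fin n) : ℕ) + 1)) * dg (σ i) :=
      (Equiv.sum_comp σ (fun j => ((n : ℤ) - ((j : ℕ) + 1)) * dg j)).symm
    rw [hre]
    push_cast
    rw [← Finset.sum_add_distrib]
    refine Finset.sum_congr rfl fun k _ => ?_
    rw [← add_mul]
    congr 1
    have : ∀ a b c : ZMod 2, (c - (a + 1)) + (c - (b + 1)) = a + b := by decide
    exact this _ _ _
  -- Step B : the three cards sum to ∑ over invSet of pointwise parities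
  have hB : (((Finset.univ.filter (fun ij : Fin n × Fin n =>
          ij.1 < ij.2 ∧ σ ij.2 < σ ij.1 ∧ Odd (dg (σ ij.1)) ∧ Odd (dg (σ ij.2)))).card : ZMod 2)
        + ((Finset.univ.filter (fun ij : Fin n × Fin n =>
          ij.1 < ij.2 ∧ σ ij.2 < σ ij.1 ∧ Even (dg (σ ij.1)) ∧ Even (dg (σ ij.2)))).card : ZMod 2)
        + ((invSet σ).card : ZMod 2))
      = ∑ p ∈ invSet σ, ((dg (σ p.1) : ZMod 2) + (dg (σ p.2) : ZMod 2)) := by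
    have h1 : (Finset.univ.filter (fun ij : Fin n × Fin n =>
          ij.1 < ij.2 ∧ σ ij.2 < σ ij.1 ∧ Odd (dg (σ ij.1)) ∧ Odd (dg (σ ij.2))))
        = (invSet σ).filter (fun ij => Odd (dg (σ ij.1)) ∧ Odd (dg (σ ij.2))) := by
      ext p; simp [invSet, and_assoc]
    have h2 : (Finset.univ.filter (fun ij : Fin n × Fin n =>
          ij.1 < ij.2 ∧ σ ij.2 < σ ij.1 ∧ Even (dg (σ ij.1)) ∧ Even (dg (σ ij.2))))
        = (invSet σ).filter (fun ij => Even (dg (σ ij.1)) ∧ Even (dg (σ ij.2))) := by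
      ext p; simp [invSet, and_assoc]
    have h3 : ((invSet σ).card : ZMod 2) = ∑ _p ∈ invSet σ, (1 : ZMod 2) := by
      rw [Finset.sum_const, nsmul_eq_mul, mul_one]
    rw [h1, h2, h3, ← Finset.sum_boole, ← Finset.sum_boole,
      ← Finset.sum_add_distrib, ← Finset.sum_add_distrib]
    exact Finset.sum_congr rfl fun p _ => parity_pointwise _ _
  -- Step C : that sum equals S
  have hC : (∑ p ∈ invSet σ, ((dg (σ p.1) : ZMod 2) + (dg (σ p.2) : ZMod 2))) = S := by
    rw [Finset.sum_add_distrib, sum_first σ (fun k => (dg k : ZMod 2)),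
      sum_second σ (fun k => (dg k : ZMod 2)), ← Finset.sum_add_distrib, hS]
    refine Finset.sum_congr rfl fun k _ => ?_
    rw [← add_mul]
    congr 1
    have e1 := split1 σ k
    have e2 := split2 σ k
    have hcast1 : ((k : ℕ) : ZMod 2)
        = ((Finset.univ.filter fun j => j < k ∧ σ j < σ k).card : ZMod 2)
          + ((Finset.univ.filter fun j => j < k ∧ σ k < σ j).card : ZMod 2) := by
      rw [e1]; push_cast; ring
    have hcast2 : (((σ k : Fin n) : ℕ) : ZMod 2)
        = ((Finset.univ.filter fun j => j < k ∧ σ j < σ k).card : ZMod 2)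
          + ((Finset.univ.filter fun j => k < j ∧ σ j < σ k).card : ZMod 2) := by
      rw [e2]; push_cast; ring
    rw [hcast1, hcast2]
    have : ∀ a b c : ZMod 2, a + b = (c + b) + (c + a) := by decide
    exact this _ _ _
  rw [hB, hC, ← hA, add_assoc, CharTwo.add_self_eq_zero, add_zero]

end TauPermAux

open TauPermAux in
/-- `τ(d_{σ(1)}, …, d_{σ(n)}) = ε_odd(σ; d) · ε_even(σ; d) · ε(σ) ·
τ(d_1, …, d_n)`, where `ε_odd(σ; d)` (resp. `ε_even(σ; d)`) is the signature of the
permutation induced by `σ` on the positions with odd (resp. even) degree and `ε(σ)` is the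
signature of `σ`. -/
theorem tau_permutation_rule (n : ℕ) (hn : 1 ≤ n) (dg : Fin n → ℤ)
    (σ : Equiv.Perm (Fin n)) :
    tauSgn n (fun i => dg (σ i)) =
      inducedSign σ (fun i => Odd (dg i)) * inducedSign σ (fun i => Even (dg i)) *
        Equiv.Perm.sign σ * tauSgn n dg := by
  rw [tauSgn, tauSgn, sign_eq_signAux, signAux_eq_pow]
  simp only [inducedSign]
  rw [χ_intCast, χ_intCast, χ_natCast, χ_natCast, χ_natCast, ← χ_add, ← χ_add, ← χ_add]
  exact congrArg χ (key dg σ)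
end
end

section
/- Let n ≥ 3 be odd and let d ≥ n. Then the antisymmetrized wheel cochain ζ_n is not identically zero: there exist smooth vector fields ξ_1, …, ξ_n on ℝ^d and a point x ∈ ℝ^d such that ζ_n(ξ_1, …, ξ_n)(x) ≠ 0, where ζ_n(ξ_1, …, ξ_n) = Σ_{σ ∈ S_n} sgn(σ) W_n(ξ_{σ(1)}, …, ξ_{σ(n)}). -/
noncomputable section

/-- The partial derivative `∂_k f` of a function `f : ℝ^d → ℝ`. -/
def pd (d : ℕ) (k : Fin d) (f : (Fin d → ℝ) → ℝ) : (Fin d → ℝ) → ℝ :=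
  fun x => fderiv ℝ f x (Pi.single k 1)

/-- The cyclic predecessor in `Fin n` (so `cpred j = j - 1` modulo `n`). -/
def cpred {n : ℕ} (j : Fin n) : Fin n :=
  ⟨((j : ℕ) + (n - 1)) % n, Nat.mod_lt _ (by have := j.isLt; omega)⟩

/-- The wheel trace
`W_n(ξ_1, …, ξ_n) = Σ_{i_1, …, i_n} (∂_{i_n} ξ_1^{i_1})(∂_{i_1} ξ_2^{i_2}) ⋯
(∂_{i_{n−1}} ξ_n^{i_n})`: the factor attached to `ξ_j` is `∂_{i_{j-1}} ξ_j^{i_j}`, indices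
understood cyclically. -/
def wheel (d n : ℕ) (ξ : Fin n → (Fin d → ℝ) → (Fin d → ℝ)) (x : Fin d → ℝ) : ℝ :=
  ∑ i : Fin n → Fin d, ∏ j : Fin n, pd d (i (cpred j)) (fun y => ξ j y (i j)) x

/-- `∇_ξ f = Σ_k ξ^k ∂_k f` for a vector field `ξ` and a function `f`. -/
def nablaSc (d : ℕ) (ξ : (Fin d → ℝ) → (Fin d → ℝ)) (f : (Fin d → ℝ) → ℝ) :
    (Fin d → ℝ) → ℝ :=
  fun x => ∑ k : Fin d, ξ x k * pd d k f x

/-- The Lie bracket `[ξ, η] = ∇_ξ η − ∇_η ξ` of vector fields on `ℝ^d`. -/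
def vfB (d : ℕ) (ξ η : (Fin d → ℝ) → (Fin d → ℝ)) : (Fin d → ℝ) → (Fin d → ℝ) :=
  fun x i => nablaSc d ξ (fun y => η y i) x - nablaSc d η (fun y => ξ y i) x

/-- The fully antisymmetrized wheel cochain
`ζ_n(ξ_1, …, ξ_n) = Σ_{σ ∈ S_n} sgn(σ) W_n(ξ_{σ(1)}, …, ξ_{σ(n)})`. -/
def zeta (d n : ℕ) (ξ : Fin n → (Fin d → ℝ) → (Fin d → ℝ)) (x : Fin d → ℝ) : ℝ :=
  ∑ σ : Equiv.Perm (Fin n), ((Equiv.Perm.sign σ : ℤ) : ℝ) * wheel d n (fun j => ξ (σ j)) x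

/-- The strictly increasing map `{0, …, n−2} → {0, …, n}` skipping the two values `i < j`. -/
def skip2 (i j t : ℕ) : ℕ := if t < i then t else if t + 1 < j then t + 1 else t + 2

/-- From a family `ξ_0, …, ξ_n` and `i < j`, the family of `n` arguments
`(v, ξ_0, …, ̂ξ_i, …, ̂ξ_j, …, ξ_n)` obtained by deleting `ξ_i` and `ξ_j` and inserting `v`
in front. -/
def insBrkt {α : Type*} {n : ℕ} (v : α) (ξ : Fin (n + 1) → α) (i j : Fin (n + 1)) :
    Fin n → α :=
  fun k =>
    if hk0 : (k : ℕ) = 0 then v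
    else ξ ⟨skip2 (i : ℕ) (j : ℕ) ((k : ℕ) - 1), by
      have hk := k.isLt
      simp only [skip2]
      split_ifs <;> omega⟩

lemma cpred_eq_sub_one (m : ℕ) (hm : 1 ≤ m) (j : Fin (m+1)) : cpred j = j - 1 := by
  apply Fin.ext
  have h1 : 1 % (m+1) = 1 := Nat.mod_eq_of_lt (by omega)
  simp [cpred, Fin.sub_def, h1, Nat.add_comm]

lemma pd_proj (d : ℕ) (k m : Fin d) (x : Fin d → ℝ) :
    pd d k (fun y => y m) x = if m = k then 1 else 0 := by
  have : (fun y : Fin d → ℝ => y m)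
      = ⇑(ContinuousLinearMap.proj (R := ℝ) (φ := fun _ : Fin d => ℝ) m) := rfl
  rw [pd, this, ContinuousLinearMap.fderiv]
  simp [Pi.single_apply]

lemma pd_zero (d : ℕ) (k : Fin d) (x : Fin d → ℝ) :
    pd d k (fun _ => (0:ℝ)) x = 0 := by
  simp [pd]

open Fin.NatCast in
lemma sign_of_rot (m : ℕ) (hm : Even m) (σ : Equiv.Perm (Fin (m+1)))
    (hσ : ∀ j, σ (j - 1) = σ j - 1) : Equiv.Perm.sign σ = 1 := by
  have key : ∀ k : ℕ, σ ((k : Fin (m+1))) = (k : Fin (m+1)) + σ 0 := by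
    intro k
    induction k with
    | zero => simp
    | succ k ih =>
      have h := hσ ((k+1 : ℕ) : Fin (m+1))
      rw [Nat.cast_succ, add_sub_cancel_right] at h
      have h2 : σ ((k : Fin (m+1)) + 1) = σ (k : Fin (m+1)) + 1 :=
        sub_eq_iff_eq_add.mp h.symm
      rw [Nat.cast_succ, h2, ih]; abel
  have pow_apply : ∀ (k : ℕ) (x : Fin (m+1)), ((finRotate (m+1))^k) x = x + (k : Fin (m+1)) := by
    intro k
    induction k with
    | zero => simp
    | succ k ih =>
      intro x
      rw [pow_succ', Equiv.Perm.mul_apply, finRotate_succ_apply, ih, Nat.cast_succ]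
      abel
  have hform : σ = (finRotate (m+1)) ^ ((σ 0 : Fin (m+1)) : ℕ) := by
    apply Equiv.ext
    intro x
    rw [pow_apply, Fin.cast_val_eq_self]
    conv_lhs => rw [← Fin.cast_val_eq_self x]
    rw [key]
    exact congrArg (· + σ 0) (Fin.cast_val_eq_self x)
  rw [hform, map_pow, sign_finRotate, Nat.add_sub_cancel, hm.neg_one_pow, one_pow]

/-- The test vector fields. -/
def myXi (d m : ℕ) (hdn : m + 1 ≤ d) : Fin (m+1) → (Fin d → ℝ) → (Fin d → ℝ) :=
  fun j y i => if i = Fin.castLE hdn j then y (Fin.castLE hdn (cpred j)) else 0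

/-- for odd `n ≥ 3` and `d ≥ n`, the antisymmetrized wheel cochain `ζ_n` is not
identically zero. -/
theorem zeta_nontrivial (d n : ℕ) (hn : Odd n) (hn3 : 3 ≤ n) (hdn : n ≤ d) :
    ∃ ξ : Fin n → (Fin d → ℝ) → (Fin d → ℝ),
      (∀ j, ContDiff ℝ (⊤ : ℕ∞) (ξ j)) ∧ ∃ x : Fin d → ℝ, zeta d n ξ x ≠ 0 := by
  obtain ⟨m, rfl⟩ : ∃ m, n = m + 1 := ⟨n - 1, by omega⟩
  have hmeven : Even m := by
    rcases hn with ⟨t, ht⟩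
    exact ⟨t, by omega⟩
  refine ⟨myXi d m hdn, ?_, 0, ?_⟩
  · intro j
    apply contDiff_pi.2
    intro i
    unfold myXi
    by_cases h : i = Fin.castLE hdn j
    · simp only [h, if_pos rfl]
      exact (ContinuousLinearMap.proj (R := ℝ) (φ := fun _ : Fin d => ℝ)
        (Fin.castLE hdn (cpred j))).contDiff
    · simp only [if_neg h]
      exact contDiff_const
  -- compute zeta
  have factor : ∀ (σ : Equiv.Perm (Fin (m+1))) (i : Fin (m+1) → Fin d) (j : Fin (m+1)),
      pd d (i (cpred j)) (fun y => myXi d m hdn (σ j) y (i j)) 0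
        = if (i j = Fin.castLE hdn (σ j) ∧ i (cpred j) = Fin.castLE hdn (cpred (σ j)))
            then 1 else 0 := by
    intro σ i j
    unfold myXi
    by_cases h : i j = Fin.castLE hdn (σ j)
    · simp only [if_pos h, pd_proj]
      by_cases h2 : i (cpred j) = Fin.castLE hdn (cpred (σ j))
      · rw [if_pos h2.symm, if_pos ⟨h, h2⟩]
      · rw [if_neg (fun hh => h2 hh.symm), if_neg (fun hh => h2 hh.2)]
    · simp only [if_neg h, pd_zero]
      rw [if_neg (fun hh => h hh.1)]
  have wheel_eq : ∀ σ : Equiv.Perm (Fin (m+1)),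
      wheel d (m+1) (fun j => myXi d m hdn (σ j)) 0
        = if (∀ j, σ (cpred j) = cpred (σ j)) then 1 else 0 := by
    intro σ
    unfold wheel
    rw [Finset.sum_congr rfl (fun i _ => Finset.prod_congr rfl (fun j _ => factor σ i j))]
    rw [Finset.sum_eq_single (fun j => Fin.castLE hdn (σ j))]
    · have step : ∀ j : Fin (m+1),
          (if ((fun t => Fin.castLE hdn (σ t)) j = Fin.castLE hdn (σ j)
              ∧ (fun t => Fin.castLE hdn (σ t)) (cpred j) = Fin.castLE hdn (cpred (σ j)))
            then (1:ℝ) else 0)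
          = if σ (cpred j) = cpred (σ j) then 1 else 0 := by
        intro j
        by_cases h : σ (cpred j) = cpred (σ j)
        · rw [if_pos ⟨rfl, congrArg (Fin.castLE hdn) h⟩, if_pos h]
        · rw [if_neg (fun hh => h (Fin.castLE_inj.mp hh.2)), if_neg h]
      rw [Finset.prod_congr rfl (fun j _ => step j), Finset.prod_boole]
      simp
    · intro i _ hi
      obtain ⟨j0, hj0⟩ : ∃ j0, i j0 ≠ Fin.castLE hdn (σ j0) := by
        by_contra hcon
        push_neg at hcon
        exact hi (funext hcon)
      exact Finset.prod_eq_zero (Finset.mem_univ j0) (by rw [if_neg (fun hh => hj0 hh.1)])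
    · intro h
      exact absurd (Finset.mem_univ _) h
  unfold zeta
  rw [Finset.sum_congr rfl (fun σ _ => by rw [wheel_eq σ])]
  have hterm : ∀ σ : Equiv.Perm (Fin (m+1)),
      ((Equiv.Perm.sign σ : ℤ) : ℝ) * (if (∀ j, σ (cpred j) = cpred (σ j)) then 1 else 0)
        = if (∀ j, σ (cpred j) = cpred (σ j)) then 1 else 0 := by
    intro σ
    by_cases h : ∀ j, σ (cpred j) = cpred (σ j)
    · have hsgn : Equiv.Perm.sign σ = 1 := by
        apply sign_of_rot m hmeven σ
        intro j
        have h' := h j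
        rwa [cpred_eq_sub_one m (by omega), cpred_eq_sub_one m (by omega)] at h'
      rw [if_pos h, hsgn]
      norm_num
    · rw [if_neg h, mul_zero]
  rw [Finset.sum_congr rfl (fun σ _ => hterm σ)]
  have h1 : (if (∀ j, (1 : Equiv.Perm (Fin (m+1))) (cpred j)
      = cpred ((1 : Equiv.Perm (Fin (m+1))) j)) then (1:ℝ) else 0) = 1 :=
    if_pos (fun j => rfl)
  have hpos := Finset.single_le_sum (f := fun σ : Equiv.Perm (Fin (m+1)) =>
      if (∀ j, σ (cpred j) = cpred (σ j)) then (1:ℝ) else 0)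
      (fun σ _ => by positivity) (Finset.mem_univ 1)
  rw [h1] at hpos
  intro hzero
  rw [hzero] at hpos
  linarith
end
end

section
/- Let d ≥ 1, let p ≥ 2 and let m_1, …, m_p be odd positive integers with m_a = m_b for some a ≠ b; set n = m_1 + ⋯ + m_p and c_j = m_1 + ⋯ + m_{j−1}. Then the antisymmetrized product of wheel traces vanishes identically: for all smooth vector fields ξ_1, …, ξ_n on ℝ^d, Σ_{σ ∈ S_n} sgn(σ) ∏_{j=1}^p W_{m_j}(ξ_{σ(c_j+1)}, …, ξ_{σ(c_j+m_j)}) = 0. -/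
noncomputable section

/-- The starting position `c_j = m_1 + ⋯ + m_{j−1}` of the `j`-th block. -/
def blockStart {p : ℕ} (m : Fin p → ℕ) (j : Fin p) : ℕ :=
  ∑ i ∈ Finset.univ.filter (fun i => i < j), m i

/-- The position `c_j + t` in `Fin (m_1 + ⋯ + m_p)` of the `t`-th element of the `j`-th
block. -/
def blockIdx {p : ℕ} (m : Fin p → ℕ) (j : Fin p) (t : Fin (m j)) : Fin (∑ i, m i) :=
  ⟨blockStart m j + (t : ℕ), by
    have h1 : blockStart m j + m j ≤ ∑ i, m i := by
      have he : ∑ x ∈ Finset.univ.erase j, m x + m j = ∑ i, m i :=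
        Finset.sum_erase_add Finset.univ m (Finset.mem_univ j)
      have hsub : Finset.univ.filter (fun i => i < j) ⊆ Finset.univ.erase j := by
        intro a ha
        simp only [Finset.mem_filter] at ha
        exact Finset.mem_erase.mpr ⟨ne_of_lt ha.2, Finset.mem_univ a⟩
      have h2 := Finset.sum_le_sum_of_subset (f := m) hsub
      unfold blockStart
      omega
    have ht := t.isLt
    omega⟩

/-- The product of wheel traces `∏_{j=1}^p W_{m_j}(ξ_{c_j+1}, …, ξ_{c_j+m_j})`. -/
def wheelProd (d p : ℕ) (m : Fin p → ℕ)
    (ξ : Fin (∑ i, m i) → (Fin d → ℝ) → (Fin d → ℝ)) (x : Fin d → ℝ) : ℝ :=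
  ∏ j : Fin p, wheel d (m j) (fun t => ξ (blockIdx m j t)) x

/-- The antisymmetrized product of wheels,
`C(ξ_1, …, ξ_n) = Σ_{σ ∈ S_n} sgn(σ) ∏_{j=1}^p W_{m_j}(ξ_{σ(c_j+1)}, …, ξ_{σ(c_j+m_j)})`
with `n = m_1 + ⋯ + m_p`. -/
def Cw (d p : ℕ) (m : Fin p → ℕ)
    (ξ : Fin (∑ i, m i) → (Fin d → ℝ) → (Fin d → ℝ)) (x : Fin d → ℝ) : ℝ :=
  ∑ σ : Equiv.Perm (Fin (∑ i, m i)), ((Equiv.Perm.sign σ : ℤ) : ℝ) *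
    wheelProd d p m (fun k => ξ (σ k)) x


lemma blockStart_add_le {p : ℕ} (m : Fin p → ℕ) {j j' : Fin p} (h : j < j') :
    blockStart m j + m j ≤ blockStart m j' := by
  unfold blockStart
  have hj : j ∉ Finset.univ.filter (fun i => i < j) := by simp
  have hsub : insert j (Finset.univ.filter (fun i => i < j)) ⊆
      Finset.univ.filter (fun i => i < j') := by
    intro i hi
    simp only [Finset.mem_insert, Finset.mem_filter, Finset.mem_univ, true_and] at *
    rcases hi with rfl | hi
    · exact h
    · exact hi.trans h
  have := Finset.sum_le_sum_of_subset (f := m) hsub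
  rw [Finset.sum_insert hj] at this
  omega

lemma listSwap_apply_fixed {ι α : Type*} [DecidableEq α] (l : List ι) (A B : ι → α) (x : α)
    (h : ∀ t ∈ l, A t ≠ x ∧ B t ≠ x) :
    (l.map (fun t => Equiv.swap (A t) (B t))).prod x = x := by
  induction l with
  | nil => simp
  | cons v rest ih =>
    simp only [List.map_cons, List.prod_cons, Equiv.Perm.mul_apply]
    rw [ih (fun t ht => h t (List.mem_cons_of_mem v ht))]
    exact Equiv.swap_apply_of_ne_of_ne (Ne.symm (h v (List.mem_cons_self (a := v) (l := rest))).1)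
      (Ne.symm (h v (List.mem_cons_self (a := v) (l := rest))).2)

lemma listSwap_apply_A {ι α : Type*} [DecidableEq α] (l : List ι) (A B : ι → α)
    (hA : Function.Injective A) (hB : Function.Injective B)
    (hAB : ∀ t t', A t ≠ B t') (hnd : l.Nodup) {u : ι} (hu : u ∈ l) :
    (l.map (fun t => Equiv.swap (A t) (B t))).prod (A u) = B u := by
  induction l with
  | nil => simp at hu
  | cons v rest ih =>
    simp only [List.map_cons, List.prod_cons, Equiv.Perm.mul_apply]
    rcases List.mem_cons.mp hu with rfl | hu'
    · rw [listSwap_apply_fixed rest A B (A u) (fun t ht =>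
        ⟨fun hc => (List.nodup_cons.mp hnd).1 (hA hc ▸ ht), fun hc => hAB u t hc.symm⟩)]
      exact Equiv.swap_apply_left _ _
    · rw [ih (List.nodup_cons.mp hnd).2 hu']
      refine Equiv.swap_apply_of_ne_of_ne (fun hc => hAB v u hc.symm) (fun hc => ?_)
      exact (List.nodup_cons.mp hnd).1 (hB hc ▸ hu')

lemma listSwap_apply_B {ι α : Type*} [DecidableEq α] (l : List ι) (A B : ι → α)
    (hA : Function.Injective A) (hB : Function.Injective B)
    (hAB : ∀ t t', A t ≠ B t') (hnd : l.Nodup) {u : ι} (hu : u ∈ l) :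
    (l.map (fun t => Equiv.swap (A t) (B t))).prod (B u) = A u := by
  induction l with
  | nil => simp at hu
  | cons v rest ih =>
    simp only [List.map_cons, List.prod_cons, Equiv.Perm.mul_apply]
    rcases List.mem_cons.mp hu with rfl | hu'
    · rw [listSwap_apply_fixed rest A B (B u) (fun t ht =>
        ⟨fun hc => hAB t u hc, fun hc => (List.nodup_cons.mp hnd).1 (hB hc ▸ ht)⟩)]
      exact Equiv.swap_apply_right _ _
    · rw [ih (List.nodup_cons.mp hnd).2 hu']
      refine Equiv.swap_apply_of_ne_of_ne (fun hc => ?_) (fun hc => hAB u v hc)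
      exact (List.nodup_cons.mp hnd).1 (hA hc ▸ hu')

lemma blockIdx_inj {p : ℕ} (m : Fin p → ℕ) {j j' : Fin p} {t : Fin (m j)} {t' : Fin (m j')}
    (h : blockIdx m j t = blockIdx m j' t') : j = j' ∧ (t : ℕ) = (t' : ℕ) := by
  have hnat : blockStart m j + (t : ℕ) = blockStart m j' + (t' : ℕ) := congrArg Fin.val h
  have hjj : j = j' := by
    by_contra hne
    rcases lt_or_gt_of_ne hne with hlt | hlt
    · have h1 := blockStart_add_le m hlt
      have := t.isLt; omega
    · have h1 := blockStart_add_le m hlt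
      have := t'.isLt; omega
  subst hjj
  exact ⟨rfl, by omega⟩

lemma wheel_cast (d : ℕ) {n n' : ℕ} (h : n = n')
    (ξ : Fin n' → (Fin d → ℝ) → (Fin d → ℝ)) (x : Fin d → ℝ) :
    wheel d n (fun t => ξ (Fin.cast h t)) x = wheel d n' ξ x := by
  subst h; rfl

/-- The permutation of `Fin (∑ i, m i)` exchanging blocks `a` and `b` (of equal length). -/
def blockSwap {p : ℕ} (m : Fin p → ℕ) (a b : Fin p) (hmab : m a = m b) :
    Equiv.Perm (Fin (∑ i, m i)) :=
  ((List.finRange (m a)).map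
    (fun t => Equiv.swap (blockIdx m a t) (blockIdx m b (Fin.cast hmab t)))).prod

section BlockSwap

variable {p : ℕ} (m : Fin p → ℕ) (a b : Fin p) (hmab : m a = m b)

lemma blockSwap_hA : Function.Injective (fun t => blockIdx m a t) := by
  intro t t' h
  exact Fin.ext (blockIdx_inj m h).2

lemma blockSwap_hB : Function.Injective (fun t : Fin (m a) => blockIdx m b (Fin.cast hmab t)) := by
  intro t t' h
  have := (blockIdx_inj m h).2
  exact Fin.ext this

lemma blockSwap_hAB (hab : a ≠ b) : ∀ t t' : Fin (m a),
    blockIdx m a t ≠ blockIdx m b (Fin.cast hmab t') := by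
  intro t t' h
  exact hab (blockIdx_inj m h).1

lemma blockSwap_apply_a (hab : a ≠ b) (t : Fin (m a)) :
    blockSwap m a b hmab (blockIdx m a t) = blockIdx m b (Fin.cast hmab t) :=
  listSwap_apply_A _ _ _ (blockSwap_hA m a) (blockSwap_hB m a b hmab)
    (blockSwap_hAB m a b hmab hab) (List.nodup_finRange _) (List.mem_finRange t)

lemma blockSwap_apply_b (hab : a ≠ b) (t : Fin (m b)) :
    blockSwap m a b hmab (blockIdx m b t) = blockIdx m a (Fin.cast hmab.symm t) := by
  have h1 : blockIdx m b t =
      blockIdx m b (Fin.cast hmab (Fin.cast hmab.symm t)) := by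
    apply Fin.ext; rfl
  rw [h1]
  exact listSwap_apply_B _ _ _ (blockSwap_hA m a) (blockSwap_hB m a b hmab)
    (blockSwap_hAB m a b hmab hab) (List.nodup_finRange _) (List.mem_finRange _)

lemma blockSwap_apply_other {j : Fin p} (hja : j ≠ a) (hjb : j ≠ b) (t : Fin (m j)) :
    blockSwap m a b hmab (blockIdx m j t) = blockIdx m j t := by
  apply listSwap_apply_fixed
  intro s _
  constructor
  · intro h; exact hja ((blockIdx_inj m h).1.symm)
  · intro h; exact hjb ((blockIdx_inj m h).1.symm)

lemma blockSwap_sign (hab : a ≠ b) (hodd : Odd (m a)) :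
    Equiv.Perm.sign (blockSwap m a b hmab) = -1 := by
  unfold blockSwap
  rw [map_list_prod, List.map_map]
  have hfun : (Equiv.Perm.sign ∘ fun t : Fin (m a) =>
      Equiv.swap (blockIdx m a t) (blockIdx m b (Fin.cast hmab t))) =
      fun _ : Fin (m a) => (-1 : ℤˣ) := by
    funext t
    exact Equiv.Perm.sign_swap (blockSwap_hAB m a b hmab hab t t)
  rw [hfun, List.map_const', List.prod_replicate, List.length_finRange]
  exact Odd.neg_one_pow hodd

end BlockSwap

lemma wheelProd_blockSwap (d p : ℕ) (m : Fin p → ℕ) (a b : Fin p) (hab : a ≠ b)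
    (hmab : m a = m b)
    (η : Fin (∑ i, m i) → (Fin d → ℝ) → (Fin d → ℝ)) (x : Fin d → ℝ) :
    wheelProd d p m (fun k => η (blockSwap m a b hmab k)) x = wheelProd d p m η x := by
  unfold wheelProd
  set F : Fin p → ℝ := fun j => wheel d (m j) (fun t => η (blockIdx m j t)) x with hF
  have hterm : ∀ j : Fin p,
      wheel d (m j) (fun t => η (blockSwap m a b hmab (blockIdx m j t))) x =
      F (Equiv.swap a b j) := by
    intro j
    by_cases hja : j = a
    · subst hja
      have h1 : (fun t : Fin (m j) => η (blockSwap m j b hmab (blockIdx m j t))) =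
          fun t => η (blockIdx m b (Fin.cast hmab t)) := by
        funext t; rw [blockSwap_apply_a m j b hmab hab t]
      rw [h1, wheel_cast d hmab (fun t => η (blockIdx m b t)) x, Equiv.swap_apply_left]
    · by_cases hjb : j = b
      · subst hjb
        have h1 : (fun t : Fin (m j) => η (blockSwap m a j hmab (blockIdx m j t))) =
            fun t => η (blockIdx m a (Fin.cast hmab.symm t)) := by
          funext t; rw [blockSwap_apply_b m a j hmab hab t]
        rw [h1, wheel_cast d hmab.symm (fun t => η (blockIdx m a t)) x,
          Equiv.swap_apply_right]
      · have h1 : (fun t : Fin (m j) => η (blockSwap m a b hmab (blockIdx m j t))) =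
            fun t => η (blockIdx m j t) := by
          funext t; rw [blockSwap_apply_other m a b hmab hja hjb t]
        rw [h1, Equiv.swap_apply_of_ne_of_ne hja hjb]
  calc (∏ j : Fin p, wheel d (m j) (fun t => η (blockSwap m a b hmab (blockIdx m j t))) x)
      = ∏ j : Fin p, F (Equiv.swap a b j) := Finset.prod_congr rfl (fun j _ => hterm j)
    _ = ∏ j : Fin p, F j := Equiv.prod_comp (Equiv.swap a b) F


/-- if two of the odd lengths `m_1, …, m_p` coincide, the antisymmetrized
product of wheel traces vanishes identically. -/
theorem wheel_product_repeated_length_vanishes (d p : ℕ) (hd : 1 ≤ d) (hp : 2 ≤ p)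
    (m : Fin p → ℕ) (hm : ∀ j, Odd (m j))
    (a b : Fin p) (hab : a ≠ b) (hmab : m a = m b)
    (ξ : Fin (∑ i, m i) → (Fin d → ℝ) → (Fin d → ℝ))
    (hξ : ∀ i, ContDiff ℝ (⊤ : ℕ∞) (ξ i)) (x : Fin d → ℝ) :
    Cw d p m ξ x = 0 := by
  classical
  set τ := blockSwap m a b hmab with hτ
  have hsign : Equiv.Perm.sign τ = -1 := blockSwap_sign m a b hmab hab (hm a)
  have hkey : ∀ σ : Equiv.Perm (Fin (∑ i, m i)),
      wheelProd d p m (fun k => ξ ((σ * τ) k)) x =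
      wheelProd d p m (fun k => ξ (σ k)) x := by
    intro σ
    have := wheelProd_blockSwap d p m a b hab hmab (fun k => ξ (σ k)) x
    simpa [Equiv.Perm.mul_apply] using this
  have h2 : Cw d p m ξ x = - Cw d p m ξ x := by
    unfold Cw
    set f : Equiv.Perm (Fin (∑ i, m i)) → ℝ := fun σ =>
      ((Equiv.Perm.sign σ : ℤ) : ℝ) * wheelProd d p m (fun k => ξ (σ k)) x with hf
    have e2 : ∀ σ, f (σ * τ) = - f σ := by
      intro σ
      have hs : Equiv.Perm.sign (σ * τ) = - Equiv.Perm.sign σ := by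
        rw [map_mul, hsign, mul_neg_one]
      simp only [hf]
      rw [hkey σ, hs, Units.val_neg, Int.cast_neg, neg_mul]
    calc ∑ σ, f σ = ∑ σ, f ((Equiv.mulRight τ) σ) := (Equiv.sum_comp (Equiv.mulRight τ) f).symm
      _ = ∑ σ, - f σ := Finset.sum_congr rfl (fun σ _ => e2 σ)
      _ = - ∑ σ, f σ := by rw [Finset.sum_neg_distrib]
  linarith
end
end
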